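/- Lower bound on collision relative entropy via information spectrum: for every 0 < ε, λ < 1 and density matrices ρ, σ, exp D₂(ρ ‖ λρ + (1−λ)σ) ≥ (1−ε) · [λ + (1−λ) · exp(−D_s^ε(ρ‖σ))]^{−1}. -/

import Mathlib

open Matrix BigOperators ComplexOrder Kronecker

variable {n : Type*} [Fintype n] [DecidableEq n]

/-- Apply a real function to a matrix via its spectral decomposition (0 if not Hermitian). -/
noncomputable def mFun (f : ℝ → ℝ) (A : Matrix n n ℂ) : Matrix n n ℂ :=
  if hA : A.IsHermitian then
    (hA.eigenvectorUnitary : Matrix n n ℂ) *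
      Matrix.diagonal (fun i => (f (hA.eigenvalues i) : ℂ)) *
      star (hA.eigenvectorUnitary : Matrix n n ℂ)
  else 0

/-- Fractional power of the Moore–Penrose pseudoinverse type: `x ↦ x^r` on the support. -/
noncomputable def mpow (r : ℝ) (A : Matrix n n ℂ) : Matrix n n ℂ :=
  mFun (fun x => if x = 0 then 0 else x ^ r) A

/-- Projection onto nonnegative eigenspaces of a Hermitian matrix. -/
noncomputable def projNonneg (A : Matrix n n ℂ) : Matrix n n ℂ :=
  mFun (fun x => if 0 ≤ x then 1 else 0) A

/-- Projection onto strictly positive eigenspaces of a Hermitian matrix. -/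
noncomputable def projPos (A : Matrix n n ℂ) : Matrix n n ℂ :=
  mFun (fun x => if 0 < x then 1 else 0) A

/-- supp ρ ⊆ supp σ, phrased via kernels (for PSD matrices). -/
def suppLE (ρ σ : Matrix n n ℂ) : Prop :=
  ∀ v : n → ℂ, σ.mulVec v = 0 → ρ.mulVec v = 0

/-- Exponential of the collision relative entropy, exp D₂(ρ‖σ) = tr[(σ^{-1/4} ρ σ^{-1/4})²]. -/
noncomputable def expD2 (ρ σ : Matrix n n ℂ) : ℝ :=
  (((mpow (-(4:ℝ)⁻¹) σ) * ρ * (mpow (-(4:ℝ)⁻¹) σ)) ^ 2).trace.re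

/-- Collision relative entropy (base 2). -/
noncomputable def D2 (ρ σ : Matrix n n ℂ) : ℝ := Real.logb 2 (expD2 ρ σ)

/-- Information spectrum relative entropy. -/
noncomputable def Ds (ε : ℝ) (ρ σ : Matrix n n ℂ) : ℝ :=
  sSup {R : ℝ | Complex.re (Matrix.trace (ρ * projNonneg ((2:ℝ)^R • σ - ρ))) ≤ ε}

/-- Density matrix. -/
def IsDensity (ρ : Matrix n n ℂ) : Prop := ρ.PosSemidef ∧ ρ.trace = 1

/-!
Put `τ = λρ + (1-λ)σ`; then `λρ ≤ τ`, so `supp ρ ⊆ supp τ` and `τ^{-1/4} τ^{1/4}` acts as the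
identity on `ρ`. For every `0 ≤ Π ≤ 1`, Cauchy–Schwarz for `⟪X, Y⟫ = tr(X Yᴴ)` applied to
`τ^{-1/4} ρ τ^{-1/4}` and `τ^{1/4} Π τ^{1/4}` gives `(tr ρΠ)² ≤ exp D₂(ρ‖τ) · tr τΠ`.
If `tr(ρ Π_{ρ ≤ 2^R σ}) ≤ ε`, take for `Π` the projection onto the negative part of `2^R σ - ρ`:
then `tr ρΠ ≥ 1 - ε` and `2^R tr σΠ ≤ tr ρΠ`, so `tr τΠ ≤ tr ρΠ · (λ + (1-λ) 2^{-R})` and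
`1 - ε ≤ exp D₂(ρ‖τ) · (λ + (1-λ) 2^{-R})`. The right side is continuous in `R`, so the bound
passes to the supremum `D_s^ε(ρ‖σ)`.
-/

open scoped MatrixOrder

omit [DecidableEq n] in
lemma Matrix.PosSemidef.re_trace_nonneg {A : Matrix n n ℂ} (hA : A.PosSemidef) :
    0 ≤ A.trace.re :=
  (Complex.nonneg_iff.mp hA.trace_nonneg).1

lemma Matrix.PosSemidef.re_trace_mul_nonneg {A B : Matrix n n ℂ} (hA : A.PosSemidef)
    (hB : B.PosSemidef) : 0 ≤ (A * B).trace.re := by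
  obtain ⟨X, rfl⟩ := CStarAlgebra.nonneg_iff_eq_star_mul_self.mp hB.nonneg
  rw [← Matrix.mul_assoc, trace_mul_cycle, star_eq_conjTranspose]
  exact (hA.mul_mul_conjTranspose_same X).re_trace_nonneg

lemma Matrix.PosSemidef.re_trace_mul_le {C P : Matrix n n ℂ} (hC : C.PosSemidef)
    (hP : (1 - P).PosSemidef) : (C * P).trace.re ≤ C.trace.re := by
  have h := hC.re_trace_mul_nonneg hP
  rw [Matrix.mul_sub, Matrix.mul_one, trace_sub, Complex.sub_re] at h
  linarith

omit [DecidableEq n] in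
lemma Matrix.IsHermitian.mul_mul_self {A B : Matrix n n ℂ} (hA : A.IsHermitian)
    (hB : B.IsHermitian) : (B * A * B).IsHermitian := by
  simpa only [hB.eq] using isHermitian_mul_mul_conjTranspose B hA

omit [DecidableEq n] in
lemma Matrix.PosSemidef.mul_mul_self {A B : Matrix n n ℂ} (hA : A.PosSemidef)
    (hB : B.IsHermitian) : (B * A * B).PosSemidef := by
  simpa only [hB.eq] using hA.mul_mul_conjTranspose_same B

lemma Matrix.IsHermitian.sq_re_trace_mul_le {X Y : Matrix n n ℂ} (hX : X.IsHermitian)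
    (hY : Y.IsHermitian) : (X * Y).trace.re ^ 2 ≤ (X * X).trace.re * (Y * Y).trace.re := by
  let _ := toMatrixSeminormedAddCommGroup (1 : Matrix n n ℂ) PosSemidef.one
  let _ := toMatrixInnerProductSpace (1 : Matrix n n ℂ) PosSemidef.one
  have h := inner_mul_inner_self_le (𝕜 := ℂ) X Y
  change ‖(Y * 1 * Xᴴ).trace‖ * ‖(X * 1 * Yᴴ).trace‖ ≤
    (X * 1 * Xᴴ).trace.re * (Y * 1 * Yᴴ).trace.re at h
  simp only [hX.eq, hY.eq, Matrix.mul_one, trace_mul_comm Y X, ← sq ‖(X * Y).trace‖] at h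
  calc (X * Y).trace.re ^ 2 = |(X * Y).trace.re| ^ 2 := (sq_abs _).symm
    _ ≤ ‖(X * Y).trace‖ ^ 2 := pow_le_pow_left₀ (abs_nonneg _) (Complex.abs_re_le_norm _) 2
    _ ≤ _ := h

section FunctionalCalculus

lemma continuousOn_spectrum (A : Matrix n n ℂ) (f : ℝ → ℝ) : ContinuousOn f (spectrum ℝ A) :=
  A.finite_real_spectrum.continuousOn f

lemma cfc_mul_cfc (A : Matrix n n ℂ) (f g : ℝ → ℝ) :
    cfc f A * cfc g A = cfc (fun x => f x * g x) A :=
  (cfc_mul f g A (continuousOn_spectrum A f) (continuousOn_spectrum A g)).symm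

variable {A : Matrix n n ℂ}

lemma mFun_eq_cfc (hA : A.IsHermitian) (f : ℝ → ℝ) : mFun f A = cfc f A := by
  rw [hA.cfc_eq, mFun, dif_pos hA, IsHermitian.cfc, Unitary.conjStarAlgAut_apply]
  rfl

lemma isHermitian_mpow (hA : A.IsHermitian) (r : ℝ) : (mpow r A).IsHermitian := by
  rw [mpow, mFun_eq_cfc hA]
  exact (cfc_predicate _ A : IsSelfAdjoint _).isHermitian

lemma mpow_mul_mpow (hA : A.PosSemidef) (r s : ℝ) : mpow r A * mpow s A = mpow (r + s) A := by
  simp only [mpow, mFun_eq_cfc hA.1, cfc_mul_cfc]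
  refine cfc_congr fun x hx => ?_
  rcases (spectrum_nonneg_of_nonneg hA.nonneg hx).eq_or_lt with rfl | hx0
  · simp
  · simp [hx0.ne', Real.rpow_add hx0]

lemma mpow_one (hA : A.IsHermitian) : mpow 1 A = A := by
  rw [mpow, mFun_eq_cfc hA]
  calc cfc (fun x => if x = 0 then 0 else x ^ (1 : ℝ)) A = cfc (fun x => x) A :=
        cfc_congr fun x _ => by split_ifs with h <;> simp [h]
    _ = A := cfc_id' ℝ A hA.isSelfAdjoint

lemma mul_one_sub_mpow_zero (hA : A.IsHermitian) : A * (1 - mpow 0 A) = 0 := by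
  calc A * (1 - mpow 0 A)
        = cfc (fun x : ℝ => x) A * cfc (fun x : ℝ => 1 - if x = 0 then 0 else x ^ (0 : ℝ)) A := by
        rw [cfc_id' ℝ A hA.isSelfAdjoint, cfc_sub _ _ A (continuousOn_spectrum A _)
          (continuousOn_spectrum A _), cfc_const_one ℝ A hA.isSelfAdjoint, mpow, mFun_eq_cfc hA]
    _ = cfc (fun _ : ℝ => 0) A := by
        rw [cfc_mul_cfc]
        exact cfc_congr fun x _ => by split_ifs with h <;> simp [h]
    _ = 0 := cfc_const_zero ℝ A

lemma one_sub_projNonneg_eq_cfc (hA : A.IsHermitian) :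
    1 - projNonneg A = cfc (fun x : ℝ => if 0 ≤ x then 0 else 1) A := by
  rw [projNonneg, mFun_eq_cfc hA, ← cfc_const_one ℝ A hA.isSelfAdjoint,
    ← cfc_sub _ _ A (continuousOn_spectrum A _) (continuousOn_spectrum A _)]
  exact cfc_congr fun x _ => by split_ifs <;> norm_num

lemma posSemidef_projNonneg (hA : A.IsHermitian) : (projNonneg A).PosSemidef := by
  rw [projNonneg, mFun_eq_cfc hA]
  exact (cfc_nonneg fun x _ => by split_ifs <;> norm_num).posSemidef

lemma posSemidef_one_sub_projNonneg (hA : A.IsHermitian) : (1 - projNonneg A).PosSemidef := by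
  rw [one_sub_projNonneg_eq_cfc hA]
  exact (cfc_nonneg fun x _ => by split_ifs <;> norm_num).posSemidef

lemma re_trace_mul_one_sub_projNonneg_nonpos (hA : A.IsHermitian) :
    (A * (1 - projNonneg A)).trace.re ≤ 0 := by
  have h : A * (1 - projNonneg A) ≤ 0 := by
    rw [one_sub_projNonneg_eq_cfc hA]
    nth_rw 1 [← cfc_id' ℝ A hA.isSelfAdjoint]
    rw [cfc_mul_cfc]
    exact cfc_nonpos _ _ fun x _ => by split_ifs <;> linarith
  simpa using (neg_nonneg.mpr h).posSemidef.re_trace_nonneg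

end FunctionalCalculus

lemma suppLE.mul_eq_zero {ρ σ Q : Matrix n n ℂ} (h : suppLE ρ σ) (hQ : σ * Q = 0) :
    ρ * Q = 0 :=
  ext_of_mulVec_single fun j => by
    rw [← mulVec_mulVec, h _ (by rw [mulVec_mulVec, hQ, zero_mulVec]), zero_mulVec]

lemma mul_mpow_zero_of_suppLE {ρ σ : Matrix n n ℂ} (hσ : σ.IsHermitian) (h : suppLE ρ σ) :
    ρ * mpow 0 σ = ρ := by
  have := h.mul_eq_zero (mul_one_sub_mpow_zero hσ)
  rwa [Matrix.mul_sub, Matrix.mul_one, sub_eq_zero, eq_comm] at this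

lemma mpow_zero_mul_of_suppLE {ρ σ : Matrix n n ℂ} (hρ : ρ.IsHermitian) (hσ : σ.IsHermitian)
    (h : suppLE ρ σ) : mpow 0 σ * ρ = ρ := by
  simpa [hρ.eq, (isHermitian_mpow hσ 0).eq] using
    congrArg conjTranspose (mul_mpow_zero_of_suppLE hσ h)

omit [DecidableEq n] in
lemma suppLE_of_smul_le {ρ τ : Matrix n n ℂ} (hρ : ρ.PosSemidef) {c : ℝ} (hc : 0 < c)
    (h : c • ρ ≤ τ) : suppLE ρ τ := by
  intro v hv
  have h1 := (le_iff.mp h).dotProduct_mulVec_nonneg v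
  rw [sub_mulVec, hv, smul_mulVec, dotProduct_sub, dotProduct_zero, dotProduct_smul,
    zero_sub, neg_nonneg] at h1
  have h2 := hρ.dotProduct_mulVec_nonneg v
  refine (hρ.dotProduct_mulVec_zero_iff v).mp (le_antisymm ?_ h2)
  exact nonpos_of_smul_nonpos_of_pos_left h1 hc

lemma expD2_nonneg {ρ τ : Matrix n n ℂ} (hρ : ρ.IsHermitian) (hτ : τ.IsHermitian) :
    0 ≤ expD2 ρ τ := by
  have hS := hρ.mul_mul_self (isHermitian_mpow hτ (-(4 : ℝ)⁻¹))
  rw [expD2, sq]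
  nth_rw 2 [← hS.eq]
  exact (posSemidef_self_mul_conjTranspose _).re_trace_nonneg

theorem sq_re_trace_mul_le_expD2_mul {ρ τ P : Matrix n n ℂ} (hρ : ρ.IsHermitian)
    (hτ : τ.PosSemidef) (hsupp : suppLE ρ τ) (hP : P.PosSemidef) (hP1 : (1 - P).PosSemidef) :
    (ρ * P).trace.re ^ 2 ≤ expD2 ρ τ * (τ * P).trace.re := by
  set N := mpow (-(4 : ℝ)⁻¹) τ
  set M := mpow (4 : ℝ)⁻¹ τ
  set B := mpow (2 : ℝ)⁻¹ τ
  have hN : N.IsHermitian := isHermitian_mpow hτ.1 _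
  have hM : M.IsHermitian := isHermitian_mpow hτ.1 _
  have hB : B.IsHermitian := isHermitian_mpow hτ.1 _
  have hNM : N * M = mpow 0 τ := by rw [mpow_mul_mpow hτ]; norm_num
  have hMN : M * N = mpow 0 τ := by rw [mpow_mul_mpow hτ]; norm_num
  have hMM : M * M = B := by rw [mpow_mul_mpow hτ, show (4 : ℝ)⁻¹ + 4⁻¹ = 2⁻¹ by norm_num]
  have hBB : B * B = τ := by rw [mpow_mul_mpow hτ]; norm_num; exact mpow_one hτ.1
  have hST : (N * ρ * N * (M * P * M)).trace = (ρ * P).trace := by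
    calc (N * ρ * N * (M * P * M)).trace = (N * (ρ * (N * M) * P * M)).trace := by
          simp only [Matrix.mul_assoc]
      _ = (ρ * (N * M) * P * (M * N)).trace := by
          rw [trace_mul_comm]; simp only [Matrix.mul_assoc]
      _ = (mpow 0 τ * ρ * P).trace := by
          rw [hNM, hMN, mul_mpow_zero_of_suppLE hτ.1 hsupp, trace_mul_cycle]
      _ = (ρ * P).trace := by rw [mpow_zero_mul_of_suppLE hρ hτ.1 hsupp]
  have hT : (M * P * M * (M * P * M)).trace = (B * P * B * P).trace := by
    calc (M * P * M * (M * P * M)).trace = (M * (P * M * (M * P * M))).trace := by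
          simp only [Matrix.mul_assoc]
      _ = (P * (B * P * B)).trace := by
          rw [trace_mul_comm]; simp only [← hMM, Matrix.mul_assoc]
      _ = (B * P * B * P).trace := trace_mul_comm _ _
  have hTT : (M * P * M * (M * P * M)).trace.re ≤ (τ * P).trace.re := by
    calc (M * P * M * (M * P * M)).trace.re = (B * P * B * P).trace.re := by rw [hT]
      _ ≤ (B * P * B).trace.re := (hP.mul_mul_self hB).re_trace_mul_le hP1
      _ = (τ * P).trace.re := by rw [trace_mul_cycle, hBB]
  calc (ρ * P).trace.re ^ 2 = (N * ρ * N * (M * P * M)).trace.re ^ 2 := by rw [hST]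
    _ ≤ (N * ρ * N * (N * ρ * N)).trace.re * (M * P * M * (M * P * M)).trace.re :=
        (hρ.mul_mul_self hN).sq_re_trace_mul_le (hP.1.mul_mul_self hM)
    _ ≤ expD2 ρ τ * (τ * P).trace.re := by
        rw [← sq]
        exact mul_le_mul_of_nonneg_left hTT (expD2_nonneg hρ hτ.1)

lemma mul_re_trace_mul_one_sub_projNonneg_le {ρ σ : Matrix n n ℂ} (hρ : ρ.IsHermitian)
    (hσ : σ.IsHermitian) (c : ℝ) :
    c * (σ * (1 - projNonneg (c • σ - ρ))).trace.re ≤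
      (ρ * (1 - projNonneg (c • σ - ρ))).trace.re := by
  have h := re_trace_mul_one_sub_projNonneg_nonpos ((hσ.smul (IsSelfAdjoint.all c)).sub hρ)
  rw [Matrix.sub_mul, smul_mul_assoc, trace_sub, trace_smul, Complex.sub_re,
    Complex.real_smul, Complex.re_ofReal_mul] at h
  linarith

section Mixture

variable {ρ σ : Matrix n n ℂ} {lam : ℝ}

omit [Fintype n] [DecidableEq n] in
lemma posSemidef_smul_add_smul (hρ : ρ.PosSemidef) (hσ : σ.PosSemidef) (hl0 : 0 ≤ lam)
    (hl1 : lam ≤ 1) : (lam • ρ + (1 - lam) • σ).PosSemidef :=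
  (hρ.smul hl0).add (hσ.smul (sub_nonneg.2 hl1))

omit [DecidableEq n] in
lemma suppLE_smul_add_smul (hρ : ρ.PosSemidef) (hσ : σ.PosSemidef) (hl0 : 0 < lam)
    (hl1 : lam ≤ 1) : suppLE ρ (lam • ρ + (1 - lam) • σ) :=
  suppLE_of_smul_le hρ hl0 <| by
    rw [le_iff, add_sub_cancel_left]
    exact hσ.smul (sub_nonneg.2 hl1)

lemma sq_re_trace_mul_le_expD2_smul_add_smul_mul (hρ : ρ.PosSemidef) (hσ : σ.PosSemidef)
    (hl0 : 0 < lam) (hl1 : lam ≤ 1) {P : Matrix n n ℂ} (hP : P.PosSemidef)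
    (hP1 : (1 - P).PosSemidef) :
    (ρ * P).trace.re ^ 2 ≤ expD2 ρ (lam • ρ + (1 - lam) • σ) *
      (lam * (ρ * P).trace.re + (1 - lam) * (σ * P).trace.re) := by
  have h := sq_re_trace_mul_le_expD2_mul hρ.1 (posSemidef_smul_add_smul hρ hσ hl0.le hl1)
    (suppLE_smul_add_smul hρ hσ hl0 hl1) hP hP1
  simpa [Matrix.add_mul, smul_mul_assoc, trace_add, trace_smul] using h

lemma one_le_expD2_smul_add_smul (hρ : IsDensity ρ) (hσ : IsDensity σ) (hl0 : 0 < lam)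
    (hl1 : lam ≤ 1) : 1 ≤ expD2 ρ (lam • ρ + (1 - lam) • σ) := by
  simpa [hρ.2, hσ.2] using
    sq_re_trace_mul_le_expD2_smul_add_smul_mul hρ.1 hσ.1 hl0 hl1 PosSemidef.one
      (by simpa using PosSemidef.zero)

lemma one_sub_le_expD2_smul_add_smul_mul (hρ : IsDensity ρ) (hσ : σ.PosSemidef) {c ε : ℝ}
    (hl0 : 0 < lam) (hl1 : lam ≤ 1) (hc : 0 < c)
    (hε : (ρ * projNonneg (c • σ - ρ)).trace.re ≤ ε) :
    1 - ε ≤ expD2 ρ (lam • ρ + (1 - lam) • σ) * (lam + (1 - lam) * c⁻¹) := by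
  set E := expD2 ρ (lam • ρ + (1 - lam) • σ)
  have hA : (c • σ - ρ).IsHermitian := (hσ.1.smul (IsSelfAdjoint.all c)).sub hρ.1.1
  set P := 1 - projNonneg (c • σ - ρ)
  set a := (ρ * P).trace.re
  set s := (σ * P).trace.re
  have ha : 1 - ε ≤ a := by
    simp only [a, P, Matrix.mul_sub, Matrix.mul_one, trace_sub, Complex.sub_re, hρ.2,
      Complex.one_re]
    linarith
  have hs : s ≤ c⁻¹ * a := by
    rw [inv_mul_eq_div, le_div_iff₀ hc, mul_comm]
    exact mul_re_trace_mul_one_sub_projNonneg_le hρ.1.1 hσ.1 c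
  have hkey := sq_re_trace_mul_le_expD2_smul_add_smul_mul hρ.1 hσ hl0 hl1
    (posSemidef_one_sub_projNonneg hA) (by simpa [P] using posSemidef_projNonneg hA)
  have hE : 0 ≤ E := expD2_nonneg hρ.1.1 (posSemidef_smul_add_smul hρ.1 hσ hl0.le hl1).1
  have hg : 0 ≤ lam + (1 - lam) * c⁻¹ :=
    add_nonneg hl0.le (mul_nonneg (sub_nonneg.2 hl1) (inv_nonneg.2 hc.le))
  have hmix : lam * a + (1 - lam) * s ≤ a * (lam + (1 - lam) * c⁻¹) := by
    linarith [mul_le_mul_of_nonneg_left hs (sub_nonneg.2 hl1)]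
  have hsq : a * a ≤ E * (lam + (1 - lam) * c⁻¹) * a := by
    linarith [mul_le_mul_of_nonneg_left hmix hE]
  nlinarith [mul_nonneg hE hg]

end Mixture

/-- `sSup` of an empty or unbounded set of reals is `0`, hence the hypothesis at `0`. -/
lemma le_apply_sSup_of_forall_le {S : Set ℝ} {f : ℝ → ℝ} {a : ℝ} (hf : Continuous f)
    (hS : ∀ x ∈ S, a ≤ f x) (h0 : a ≤ f 0) : a ≤ f (sSup S) := by
  rcases S.eq_empty_or_nonempty with rfl | hne
  · rwa [Real.sSup_empty]
  by_cases hb : BddAbove S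
  · exact closure_minimal hS (isClosed_le continuous_const hf) (csSup_mem_closure hne hb)
  · rwa [Real.sSup_of_not_bddAbove hb]

theorem collision_vs_information_spectrum_general (ρ σ : Matrix n n ℂ)
    (hρ : IsDensity ρ) (hσ : IsDensity σ)
    (ε lam : ℝ) (hε0 : 0 < ε) (hl0 : 0 < lam) (hl1 : lam < 1) :
    (1 - ε) * (lam + (1 - lam) * (2:ℝ) ^ (-(Ds ε ρ σ)))⁻¹
      ≤ expD2 ρ (lam • ρ + (1 - lam) • σ) := by
  have hg : 0 < lam + (1 - lam) * (2 : ℝ) ^ (-Ds ε ρ σ) :=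
    add_pos_of_pos_of_nonneg hl0 (mul_nonneg (sub_nonneg.2 hl1.le) (by positivity))
  rw [← div_eq_mul_inv, div_le_iff₀ hg]
  refine le_apply_sSup_of_forall_le (f := fun R => expD2 ρ (lam • ρ + (1 - lam) • σ) *
    (lam + (1 - lam) * (2 : ℝ) ^ (-R))) (by fun_prop (disch := norm_num)) (fun R hR => ?_) ?_
  · simpa only [← Real.rpow_neg zero_le_two] using
      one_sub_le_expD2_smul_add_smul_mul hρ hσ.1 hl0 hl1.le (Real.rpow_pos_of_pos two_pos R) hR
  · have := one_le_expD2_smul_add_smul hρ hσ hl0 hl1.le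
    simp only [neg_zero, Real.rpow_zero, mul_one, add_sub_cancel]
    linarith

/-- exp D₂(ρ‖λρ+(1−λ)σ) ≥ (1−ε)[λ + (1−λ)2^{−D_s^ε(ρ‖σ)}]⁻¹. -/
theorem collision_vs_information_spectrum (ρ σ : Matrix n n ℂ)
    (hρ : IsDensity ρ) (hσ : IsDensity σ)
    (ε lam : ℝ) (hε0 : 0 < ε) (hε1 : ε < 1) (hl0 : 0 < lam) (hl1 : lam < 1) :
    (1 - ε) * (lam + (1 - lam) * (2:ℝ) ^ (-(Ds ε ρ σ)))⁻¹
      ≤ expD2 ρ (lam • ρ + (1 - lam) • σ) :=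
  collision_vs_information_spectrum_general ρ σ hρ hσ ε lam hε0 hl0 hl1
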